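/- Let F be an acyclic agreement forest for a set of trees T on the same leaf set, and let σ be any leaf ordering that lists all leaves of C_1 before all leaves of C_2, etc., following a topological ordering (C_1,...,C_k) of the inheritance graph of F. Then for every component C_i, every leaf l_j ∈ L(C_i) that is not the first leaf of C_i (under σ) satisfies OLA(T,σ)_j = OLA(T',σ)_j for all trees T, T' in the collection. -/

import Mathlib

open scoped Classical

namespace OLA

/-- Rooted binary phylogenetic trees with `ℕ`-labeled leaves. -/
inductive BTree where
  | leaf (x : ℕ)
  | node (l r : BTree)
deriving DecidableEq

namespace BTree

def leafList : BTree → List ℕ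
  | .leaf x => [x]
  | .node l r => leafList l ++ leafList r

def leafSet (t : BTree) : Finset ℕ := t.leafList.toFinset

/-- `t` is a phylogenetic tree on the leaf set `{0, …, n-1}`. -/
def IsPhylo (t : BTree) (n : ℕ) : Prop :=
  t.leafList.Nodup ∧ t.leafSet = Finset.range n

def minLeaf : BTree → ℕ
  | .leaf x => x
  | .node l r => min (minLeaf l) (minLeaf r)

/-- OLA index of the root of a (sub)tree: leaf label, or minus the second
smallest of the minimal leaves of the two children. -/
def idx : BTree → ℤ
  | .leaf x => (x : ℤ)
  | .node l r => -(max (minLeaf l) (minLeaf r) : ℤ)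

/-- Restriction `T^i` of `t` to the leaves labeled `≤ i` (suppressing
degree-2 nodes); `none` if no such leaf exists. -/
def restrictLe : BTree → ℕ → Option BTree
  | .leaf x, i => if x ≤ i then some (.leaf x) else none
  | .node l r, i =>
    match restrictLe l i, restrictLe r i with
    | some l', some r' => some (.node l' r')
    | some l', none => some l'
    | none, some r' => some r'
    | none, none => none

/-- Restriction `T|_S` of `t` to the leaves in `S` (suppressing degree-2 nodes). -/
def restrictTo : BTree → Finset ℕ → Option BTree
  | .leaf x, S => if x ∈ S then some (.leaf x) else none
  | .node l r, S =>
    match restrictTo l S, restrictTo r S with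
    | some l', some r' => some (.node l' r')
    | some l', none => some l'
    | none, some r' => some r'
    | none, none => none

/-- OLA index of the sibling of the leaf labeled `i`, if it exists. -/
def siblingIdx : BTree → ℕ → Option ℤ
  | .leaf _, _ => none
  | .node l r, i =>
    if l = .leaf i then some r.idx
    else if r = .leaf i then some l.idx
    else (siblingIdx l i).orElse (fun _ => siblingIdx r i)

/-- The OLA vector entry of `t` at position `i ≥ 1`: the index of the sibling
of leaf `i` in the restriction of `t` to leaves `0, …, i`. -/
def olaEntry (t : BTree) (i : ℕ) : ℤ :=
  ((t.restrictLe i).bind (fun t' => t'.siblingIdx i)).getD 0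

def relabel (f : ℕ → ℕ) : BTree → BTree
  | .leaf x => .leaf (f x)
  | .node l r => .node (relabel f l) (relabel f r)

/-- The set of clusters (leaf sets of rooted subtrees) of `t`.  Two leaf-labeled
trees over the same leaf set are isomorphic iff their cluster sets coincide. -/
def clusters : BTree → Set (Set ℕ)
  | .leaf x => {{x}}
  | .node l r => insert {y | y ∈ (node l r).leafList} (clusters l ∪ clusters r)

def subtreeAt : BTree → List Bool → Option BTree
  | t, [] => some t
  | .leaf _, _ :: _ => none
  | .node l _, false :: p => subtreeAt l p
  | .node _ r, true :: p => subtreeAt r p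

/-- `w` occurs as a rooted subtree (i.e. the subtree below a node) of `t`. -/
def IsNode (t w : BTree) : Prop := ∃ p, t.subtreeAt p = some w

/-- The position of the least common ancestor of the leaves in `S`. -/
def lcaPos : BTree → Finset ℕ → List Bool
  | .leaf _, _ => []
  | .node l r, S =>
    if S ⊆ l.leafSet then false :: lcaPos l S
    else if S ⊆ r.leafSet then true :: lcaPos r S
    else []

/-- Positions of the nodes of the minimal spanning subtree `T(S)`. -/
def spanNodes (t : BTree) (S : Finset ℕ) : Set (List Bool) :=
  {p | t.lcaPos S <+: p ∧ ∃ u, t.subtreeAt p = some u ∧ ∃ x ∈ S, x ∈ u.leafList}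

end BTree

/-- OLA vector of tree `t` under the leaf ordering `σ` (leaf `x` is the
`σ x`-th leaf in the order). -/
def ola (t : BTree) (σ : Equiv.Perm ℕ) (i : ℕ) : ℤ :=
  (t.relabel σ).olaEntry i

/-- `σ` is a valid leaf ordering of the leaf set `{0, …, n-1}`. -/
def IsOrdering (σ : Equiv.Perm ℕ) (n : ℕ) : Prop := ∀ x < n, σ x < n

/-- The set of (corrected) mismatched indices among `{1, …, i}` of a family of
OLA vectors: an index is mismatched if two of the vectors differ there, or if
all vectors place that leaf above the internal node created by an
already-mismatched leaf. -/
noncomputable def mismatch {ι : Type*} (v : ι → ℕ → ℤ) : ℕ → Finset ℕ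
  | 0 => ∅
  | i + 1 =>
    let M := mismatch v i
    if (∃ a b : ι, v a (i+1) ≠ v b (i+1)) ∨ (∃ j ∈ M, ∀ a : ι, v a (i+1) = -(j : ℤ))
    then insert (i+1) M else M

/-- Corrected OLA distance of a family of OLA vectors of trees on `n` leaves. -/
noncomputable def corrDist {ι : Type*} (v : ι → ℕ → ℤ) (n : ℕ) : ℕ :=
  (mismatch v (n-1)).card

/-- Hamming OLA distance: the number of indices where at least two vectors differ. -/
noncomputable def hamDist {ι : Type*} (v : ι → ℕ → ℤ) (n : ℕ) : ℕ :=
  ((Finset.Icc 1 (n-1)).filter fun i => ∃ a b : ι, v a i ≠ v b i).card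

/-- `comp` is an agreement forest for the trees `ts` over leaf set `{0,…,n-1}`:
components have pairwise disjoint leaf sets partitioning the full leaf set,
each tree restricted to a component's leaves is isomorphic to the component,
and the spanning subtrees are node-disjoint in each tree. -/
def IsAF {ι : Type*} (ts : ι → BTree) (n : ℕ) {f : ℕ} (comp : Fin f → BTree) : Prop :=
  (∀ i, (comp i).leafList.Nodup) ∧
  (∀ i j, i ≠ j → Disjoint (comp i).leafSet (comp j).leafSet) ∧
  (Finset.univ.biUnion (fun i => (comp i).leafSet) = Finset.range n) ∧
  (∀ a i, ∃ c, (ts a).restrictTo (comp i).leafSet = some c ∧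
      c.clusters = (comp i).clusters) ∧
  (∀ a i j, i ≠ j →
      Disjoint (BTree.spanNodes (ts a) ((comp i).leafSet))
               (BTree.spanNodes (ts a) ((comp j).leafSet)))

/-- Edge of the inheritance graph: some tree has a directed path from the root
of the spanning subtree of component `i` down to that of component `j`. -/
def inhEdge {ι : Type*} (ts : ι → BTree) {f : ℕ} (comp : Fin f → BTree)
    (i j : Fin f) : Prop :=
  i ≠ j ∧ ∃ a, (BTree.lcaPos (ts a) ((comp i).leafSet)) <+:
      (BTree.lcaPos (ts a) ((comp j).leafSet))

/-- `comp` is an acyclic agreement forest for `ts`. -/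
def IsAAF {ι : Type*} (ts : ι → BTree) (n : ℕ) {f : ℕ} (comp : Fin f → BTree) : Prop :=
  IsAF ts n comp ∧ ∀ i, ¬ Relation.TransGen (inhEdge ts comp) i i

/-- Size of a maximum acyclic agreement forest (an AAF with fewest components). -/
noncomputable def maafSize {ι : Type*} (ts : ι → BTree) (n : ℕ) : ℕ :=
  sInf {f | ∃ comp : Fin f → BTree, IsAAF ts n comp}

end OLA

/-!
Relabelling by `σ` reduces everything to `σ = id`, where the components come in increasing
label order. Fix a leaf `m` of a component `C_i` other than its smallest, and let
`A = L(C_i) ∩ [0, m]` and `B = [0, m]`; the OLA entry at `m` is the index of the sibling of `m`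
in `T|_B`.
Descending from the root to the least common ancestor of `A` does not change the sibling of `m`
in `T|_B` nor in `T|_A`. That ancestor lies in the spanning subtree `T(L(C_i))`, and every leaf
`≤ m` below it belongs to `C_i`: a leaf of another component `C_j` there would give either a
node shared by `T(L(C_i))` and `T(L(C_j))`, or an inheritance edge `C_i → C_j` with `j < i`.
So the sibling of `m` is the same in `T|_B` and `T|_A = (T|_{L(C_i)})|_A`, and since
`T|_{L(C_i)} ≅ C_i` it is the sibling of `m` in `C_i|_A`, whatever `T` is.
-/

namespace OLA
namespace BTree

@[simp] lemma mem_leafSet {t : BTree} {x : ℕ} : x ∈ t.leafSet ↔ x ∈ t.leafList :=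
  List.mem_toFinset

lemma exists_mem_leafList : ∀ t : BTree, ∃ x, x ∈ t.leafList
  | .leaf x => ⟨x, List.mem_singleton_self x⟩
  | .node l _ => (exists_mem_leafList l).imp fun _ hx => List.mem_append_left _ hx

lemma notMem_right_of_nodup_node {l r : BTree} (h : (node l r).leafList.Nodup) {x : ℕ}
    (hl : x ∈ l.leafList) : x ∉ r.leafList :=
  fun hr => (List.nodup_append.1 h).2.2 x hl x hr rfl

lemma restrictTo_eq_none {t : BTree} {S : Finset ℕ} :
    t.restrictTo S = none ↔ ∀ x ∈ t.leafList, x ∉ S := by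
  induction t with
  | leaf x => by_cases hx : x ∈ S <;> simp [restrictTo, leafList, hx]
  | node l r ihl ihr =>
    simp only [leafList, List.mem_append, or_imp, forall_and, ← ihl, ← ihr, restrictTo]
    cases l.restrictTo S <;> cases r.restrictTo S <;> simp

lemma exists_restrictTo_eq_some {t : BTree} {S : Finset ℕ} {x : ℕ}
    (hx : x ∈ t.leafList) (hxS : x ∈ S) : ∃ u, t.restrictTo S = some u := by
  rw [← Option.isSome_iff_exists, Option.isSome_iff_ne_none, Ne, restrictTo_eq_none]
  exact fun h => h x hx hxS

lemma leafList_of_restrictTo_eq_some {t u : BTree} {S : Finset ℕ}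
    (h : t.restrictTo S = some u) : u.leafList = t.leafList.filter (· ∈ S) := by
  induction t generalizing u with
  | leaf x =>
    simp only [restrictTo] at h
    split_ifs at h with hx
    cases h
    simp [leafList, hx]
  | node l r ihl ihr =>
    have filter_nil {v : BTree} (hv : v.restrictTo S = none) : v.leafList.filter (· ∈ S) = [] :=
      List.filter_eq_nil_iff.2 fun x hx => by simpa using restrictTo_eq_none.1 hv x hx
    simp only [restrictTo] at h
    cases hl : l.restrictTo S <;> cases hr : r.restrictTo S <;>
      simp only [hl, hr, Option.some.injEq, reduceCtorEq] at h <;> subst h <;>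
      simp [leafList, List.filter_append, ihl, ihr, filter_nil, hl, hr]

lemma mem_of_restrictTo_eq_some {t u : BTree} {S : Finset ℕ} {x : ℕ}
    (h : t.restrictTo S = some u) : x ∈ u.leafList ↔ x ∈ t.leafList ∧ x ∈ S := by
  simp [leafList_of_restrictTo_eq_some h]

lemma nodup_of_restrictTo_eq_some {t u : BTree} {S : Finset ℕ}
    (h : t.restrictTo S = some u) (ht : t.leafList.Nodup) : u.leafList.Nodup := by
  rw [leafList_of_restrictTo_eq_some h]
  exact ht.filter _

lemma restrictTo_congr {t : BTree} {S S' : Finset ℕ}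
    (h : ∀ x ∈ t.leafList, x ∈ S ↔ x ∈ S') : t.restrictTo S = t.restrictTo S' := by
  induction t with
  | leaf x => simp [restrictTo, h x (List.mem_singleton_self x)]
  | node l r ihl ihr =>
    simp only [leafList, List.mem_append] at h
    simp only [restrictTo, ihl fun x hx => h x (.inl hx), ihr fun x hx => h x (.inr hx)]

lemma restrictLe_eq_restrictTo_range (t : BTree) (m : ℕ) :
    t.restrictLe m = t.restrictTo (Finset.range (m + 1)) := by
  induction t with
  | leaf x => simp [restrictLe, restrictTo]
  | node l r ihl ihr => simp only [restrictLe, restrictTo, ihl, ihr]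

lemma restrictTo_bind_restrictTo (t : BTree) (S S' : Finset ℕ) :
    (t.restrictTo S).bind (·.restrictTo S') = t.restrictTo (S ∩ S') := by
  induction t with
  | leaf x => by_cases hx : x ∈ S <;> simp [restrictTo, hx]
  | node l r ihl ihr =>
    simp only [restrictTo, ← ihl, ← ihr]
    rcases l.restrictTo S with _ | l' <;> rcases r.restrictTo S with _ | r' <;>
      simp only [Option.bind, restrictTo] <;> split <;> simp_all

lemma siblingIdx_eq_none {t : BTree} {i : ℕ} (h : i ∉ t.leafList) : t.siblingIdx i = none := by
  induction t with
  | leaf x => rfl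
  | node l r ihl ihr =>
    simp only [leafList, List.mem_append, not_or] at h
    have hl : l ≠ .leaf i := by rintro rfl; simp [leafList] at h
    have hr : r ≠ .leaf i := by rintro rfl; simp [leafList] at h
    simp [siblingIdx, hl, hr, ihl h.1, ihr h.2]

lemma siblingIdx_node_comm {l r : BTree} (h : (node l r).leafList.Nodup) (i : ℕ) :
    (node l r).siblingIdx i = (node r l).siblingIdx i := by
  by_cases hl : l = .leaf i
  · have hr : r ≠ .leaf i := by
      rintro rfl
      subst hl
      exact notMem_right_of_nodup_node (x := i) h (by simp [leafList]) (by simp [leafList])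
    simp [siblingIdx, hl, hr]
  by_cases hr : r = .leaf i
  · simp [siblingIdx, hl, hr]
  simp only [siblingIdx, if_neg hl, if_neg hr]
  by_cases hil : i ∈ l.leafList
  · have hir : i ∉ r.leafList := fun hir => notMem_right_of_nodup_node h hil hir
    simp [siblingIdx_eq_none hir]
  · simp [siblingIdx_eq_none hil]

/-- Isomorphism of leaf-labelled rooted binary trees. -/
def MirrorEquiv : BTree → BTree → Prop
  | .leaf x, .leaf y => x = y
  | .node l r, .node l' r' =>
    (MirrorEquiv l l' ∧ MirrorEquiv r r') ∨ (MirrorEquiv l r' ∧ MirrorEquiv r l')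
  | _, _ => False

namespace MirrorEquiv

lemma minLeaf_eq : ∀ {t t' : BTree}, MirrorEquiv t t' → t.minLeaf = t'.minLeaf
  | .leaf _, .leaf _, h => h
  | .node _ _, .node _ _, .inl ⟨h₁, h₂⟩ => by
    simp [minLeaf, h₁.minLeaf_eq, h₂.minLeaf_eq]
  | .node _ _, .node _ _, .inr ⟨h₁, h₂⟩ => by
    simp [minLeaf, h₁.minLeaf_eq, h₂.minLeaf_eq, min_comm]

lemma idx_eq : ∀ {t t' : BTree}, MirrorEquiv t t' → t.idx = t'.idx
  | .leaf _, .leaf _, h => by simp [idx, show _ = _ from h]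
  | .node _ _, .node _ _, .inl ⟨h₁, h₂⟩ => by simp [idx, h₁.minLeaf_eq, h₂.minLeaf_eq]
  | .node _ _, .node _ _, .inr ⟨h₁, h₂⟩ => by
    simp [idx, h₁.minLeaf_eq, h₂.minLeaf_eq, max_comm]

lemma eq_leaf_iff : ∀ {t t' : BTree}, MirrorEquiv t t' → ∀ i, t = .leaf i ↔ t' = .leaf i
  | .leaf _, .leaf _, h, _ => by simp [show _ = _ from h]
  | .node _ _, .node _ _, _, _ => by simp

lemma restrictTo : ∀ {t t' : BTree}, MirrorEquiv t t' → ∀ S : Finset ℕ,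
    Option.Rel MirrorEquiv (t.restrictTo S) (t'.restrictTo S)
  | .leaf x, .leaf _, h, S => by
    cases show x = _ from h
    by_cases hx : x ∈ S <;> simp [BTree.restrictTo, hx, Option.rel_some_some, MirrorEquiv]
  | .node l r, .node l' r', h, S => by
    simp only [BTree.restrictTo]
    rcases h with ⟨h₁, h₂⟩ | ⟨h₁, h₂⟩ <;>
    · have e₁ := h₁.restrictTo S
      have e₂ := h₂.restrictTo S
      generalize l.restrictTo S = a, l'.restrictTo S = a', r.restrictTo S = b,
        r'.restrictTo S = b' at *
      rcases e₁ with _ | e₁ <;> rcases e₂ with _ | e₂ <;>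
        constructor <;> simp_all [MirrorEquiv]

lemma siblingIdx_eq : ∀ {t t' : BTree}, MirrorEquiv t t' → t.leafList.Nodup →
    ∀ i, t.siblingIdx i = t'.siblingIdx i
  | .leaf _, .leaf _, _, _, _ => rfl
  | .node l r, .node l' r', .inl ⟨h₁, h₂⟩, hn, i => by
    obtain ⟨hnl, hnr, -⟩ := List.nodup_append.1 hn
    simp only [BTree.siblingIdx, h₁.eq_leaf_iff, h₂.eq_leaf_iff, h₁.idx_eq, h₂.idx_eq,
      h₁.siblingIdx_eq hnl, h₂.siblingIdx_eq hnr]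
  | .node l r, .node l' r', .inr ⟨h₁, h₂⟩, hn, i => by
    obtain ⟨hnl, hnr, -⟩ := List.nodup_append.1 hn
    rw [siblingIdx_node_comm hn]
    simp only [BTree.siblingIdx, h₁.eq_leaf_iff, h₂.eq_leaf_iff, h₁.idx_eq, h₂.idx_eq,
      h₁.siblingIdx_eq hnl, h₂.siblingIdx_eq hnr]

end MirrorEquiv

lemma clusters_node (l r : BTree) :
    (node l r).clusters = insert {y | y ∈ (node l r).leafList} (l.clusters ∪ r.clusters) := rfl

lemma setOf_mem_leafList_mem_clusters : ∀ t : BTree, {y | y ∈ t.leafList} ∈ t.clusters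
  | .leaf x => by simp [clusters, leafList]
  | .node _ _ => Set.mem_insert _ _

lemma subset_of_mem_clusters : ∀ {t : BTree} {C : Set ℕ}, C ∈ t.clusters →
    C ⊆ {y | y ∈ t.leafList}
  | .leaf x, C, h => by simp_all [clusters, leafList]
  | .node l r, C, h => by
    rcases h with rfl | h | h
    · exact subset_rfl
    · exact (subset_of_mem_clusters h).trans fun y hy => List.mem_append_left _ hy
    · exact (subset_of_mem_clusters h).trans fun y hy => List.mem_append_right _ hy

lemma nonempty_of_mem_clusters : ∀ {t : BTree} {C : Set ℕ}, C ∈ t.clusters → C.Nonempty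
  | .leaf x, C, h => by simp_all [clusters]
  | .node l r, C, h => by
    rcases h with rfl | h | h
    · exact exists_mem_leafList _
    · exact nonempty_of_mem_clusters h
    · exact nonempty_of_mem_clusters h

lemma clusters_node_comm (l r : BTree) : (node l r).clusters = (node r l).clusters := by
  simp only [clusters_node, leafList, List.mem_append, or_comm, Set.union_comm]

lemma clusters_left_eq {l r : BTree} (hn : (node l r).leafList.Nodup) :
    l.clusters = {C ∈ (node l r).clusters | C ⊆ {y | y ∈ l.leafList}} := by
  ext C
  refine ⟨fun h => ⟨.inr (.inl h), subset_of_mem_clusters h⟩, fun ⟨h, hCl⟩ => ?_⟩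
  rcases h with rfl | h | h
  · obtain ⟨y, hy⟩ := exists_mem_leafList r
    exact (notMem_right_of_nodup_node hn (hCl (List.mem_append_right _ hy)) hy).elim
  · exact h
  · obtain ⟨y, hy⟩ := nonempty_of_mem_clusters h
    exact (notMem_right_of_nodup_node hn (hCl hy) (subset_of_mem_clusters h hy)).elim

lemma clusters_right_eq {l r : BTree} (hn : (node l r).leafList.Nodup) :
    r.clusters = {C ∈ (node l r).clusters | C ⊆ {y | y ∈ r.leafList}} := by
  rw [clusters_node_comm]
  exact clusters_left_eq (List.nodup_append_comm.1 hn)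

lemma subset_left_or_right_of_mem_clusters {l r : BTree} {C : Set ℕ}
    (h : C ∈ (node l r).clusters) (hne : C ≠ {y | y ∈ (node l r).leafList}) :
    C ⊆ {y | y ∈ l.leafList} ∨ C ⊆ {y | y ∈ r.leafList} := by
  rcases h with h | h | h
  · exact (hne h).elim
  · exact .inl (subset_of_mem_clusters h)
  · exact .inr (subset_of_mem_clusters h)

lemma setOf_mem_leafList_eq_of_clusters_eq {t t' : BTree} (h : t.clusters = t'.clusters) :
    {y | y ∈ t.leafList} = {y | y ∈ t'.leafList} :=
  (subset_of_mem_clusters (h ▸ setOf_mem_leafList_mem_clusters t)).antisymm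
    (subset_of_mem_clusters (h ▸ setOf_mem_leafList_mem_clusters t'))

lemma setOf_mem_leafList_left_ne {l r : BTree} (hn : (node l r).leafList.Nodup) :
    {y | y ∈ l.leafList} ≠ {y | y ∈ (node l r).leafList} := by
  intro h
  obtain ⟨y, hy⟩ := exists_mem_leafList r
  have hy' : y ∈ {y | y ∈ (node l r).leafList} := List.mem_append_right _ hy
  exact notMem_right_of_nodup_node hn (show y ∈ {y | y ∈ l.leafList} from h ▸ hy') hy

lemma setOf_mem_leafList_right_eq {l r : BTree} (hn : (node l r).leafList.Nodup) :
    {y | y ∈ r.leafList} = {y | y ∈ (node l r).leafList} \ {y | y ∈ l.leafList} := by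
  ext y
  simp only [leafList, Set.mem_sdiff, Set.mem_ofPred_eq, List.mem_append]
  exact ⟨fun hy => ⟨.inr hy, fun hl => notMem_right_of_nodup_node hn hl hy⟩,
    fun ⟨hy, hl⟩ => hy.resolve_left hl⟩

lemma clusters_leaf_ne_node {x : ℕ} {l r : BTree} (hn : (node l r).leafList.Nodup) :
    (leaf x).clusters ≠ (node l r).clusters := by
  intro h
  have hx := setOf_mem_leafList_eq_of_clusters_eq h
  obtain ⟨a, ha⟩ := exists_mem_leafList l
  obtain ⟨b, hb⟩ := exists_mem_leafList r
  have ha' : a ∈ {y | y ∈ (leaf x).leafList} := hx ▸ List.mem_append_left _ ha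
  have hb' : b ∈ {y | y ∈ (leaf x).leafList} := hx ▸ List.mem_append_right _ hb
  simp only [leafList, Set.mem_ofPred_eq, List.mem_singleton] at ha' hb'
  exact notMem_right_of_nodup_node hn ha (ha' ▸ hb' ▸ hb)

lemma mirrorEquiv_of_clusters_eq : ∀ {t t' : BTree}, t.leafList.Nodup → t'.leafList.Nodup →
    t.clusters = t'.clusters → MirrorEquiv t t'
  | .leaf x, .leaf y, _, _, h => by simpa [clusters, MirrorEquiv] using h
  | .leaf _, .node _ _, _, hn', h => (clusters_leaf_ne_node hn' h).elim
  | .node _ _, .leaf _, hn, _, h => (clusters_leaf_ne_node hn h.symm).elim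
  | .node l r, .node l' r', hn, hn', h => by
    have hl := List.nodup_append.1 hn |>.1
    have hr := List.nodup_append.1 hn |>.2.1
    have aligned : ∀ {l' r' : BTree}, (node l' r').leafList.Nodup →
        (node l r).clusters = (node l' r').clusters →
        {y | y ∈ l.leafList} ⊆ {y | y ∈ l'.leafList} →
        MirrorEquiv l l' ∧ MirrorEquiv r r' := by
      intro l' r' hn' h hll'
      have htop := setOf_mem_leafList_eq_of_clusters_eq h
      have hl'l : {y | y ∈ l'.leafList} ⊆ {y | y ∈ l.leafList} := by
        have hmem : {y | y ∈ l'.leafList} ∈ (node l r).clusters :=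
          h ▸ .inr (.inl (setOf_mem_leafList_mem_clusters l'))
        refine (subset_left_or_right_of_mem_clusters hmem
          (htop ▸ setOf_mem_leafList_left_ne hn')).resolve_right fun hl'r => ?_
        obtain ⟨y, hy⟩ := exists_mem_leafList l
        exact notMem_right_of_nodup_node hn hy (hl'r (hll' hy))
      have hL := hll'.antisymm hl'l
      have hR : {y | y ∈ r.leafList} = {y | y ∈ r'.leafList} := by
        rw [setOf_mem_leafList_right_eq hn, setOf_mem_leafList_right_eq hn', htop, hL]
      have hl' := List.nodup_append.1 hn' |>.1
      have hr' := List.nodup_append.1 hn' |>.2.1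
      refine ⟨mirrorEquiv_of_clusters_eq hl hl' ?_, mirrorEquiv_of_clusters_eq hr hr' ?_⟩
      · rw [clusters_left_eq hn, clusters_left_eq hn', h, hL]
      · rw [clusters_right_eq hn, clusters_right_eq hn', h, hR]
    have hmem : {y | y ∈ l.leafList} ∈ (node l' r').clusters :=
      h ▸ .inr (.inl (setOf_mem_leafList_mem_clusters l))
    rcases subset_left_or_right_of_mem_clusters hmem
      (setOf_mem_leafList_eq_of_clusters_eq h ▸ setOf_mem_leafList_left_ne hn) with hL | hL
    · exact .inl (aligned hn' h hL)
    · exact .inr (aligned (List.nodup_append_comm.1 hn') (h.trans (clusters_node_comm _ _)) hL)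

lemma subtreeAt_append : ∀ (t : BTree) (p q : List Bool),
    t.subtreeAt (p ++ q) = (t.subtreeAt p).bind (·.subtreeAt q)
  | t, [], q => by cases t <;> rfl
  | .leaf _, _ :: _, _ => rfl
  | .node l _, false :: p, q => subtreeAt_append l p q
  | .node _ r, true :: p, q => subtreeAt_append r p q

lemma mem_leafList_of_subtreeAt : ∀ {t u : BTree} {p : List Bool} {x : ℕ},
    t.subtreeAt p = some u → x ∈ u.leafList → x ∈ t.leafList
  | t, u, [], _, h, hx => by cases t <;> cases h <;> exact hx
  | .leaf _, _, _ :: _, _, h, _ => by cases h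
  | .node l _, _, false :: _, _, h, hx =>
    List.mem_append_left _ (mem_leafList_of_subtreeAt (t := l) h hx)
  | .node _ r, _, true :: _, _, h, hx =>
    List.mem_append_right _ (mem_leafList_of_subtreeAt (t := r) h hx)

lemma prefix_or_prefix_of_subtreeAt : ∀ {t u w : BTree} {p q : List Bool} {x : ℕ},
    t.leafList.Nodup → t.subtreeAt p = some u → t.subtreeAt q = some w →
    x ∈ u.leafList → x ∈ w.leafList → p <+: q ∨ q <+: p
  | _, _, _, [], _, _, _, _, _, _, _ => .inl List.nil_prefix
  | _, _, _, _ :: _, [], _, _, _, _, _, _ => .inr List.nil_prefix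
  | .leaf _, _, _, _ :: _, _ :: _, _, _, hp, _, _, _ => by cases hp
  | .node l r, _, _, b :: p, c :: q, _, hn, hp, hq, hxu, hxw => by
    obtain ⟨hl, hr, -⟩ := List.nodup_append.1 hn
    cases b <;> cases c
    · simpa using prefix_or_prefix_of_subtreeAt (t := l) hl hp hq hxu hxw
    · exact (notMem_right_of_nodup_node hn (mem_leafList_of_subtreeAt (t := l) hp hxu)
        (mem_leafList_of_subtreeAt (t := r) hq hxw)).elim
    · exact (notMem_right_of_nodup_node hn (mem_leafList_of_subtreeAt (t := l) hq hxw)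
        (mem_leafList_of_subtreeAt (t := r) hp hxu)).elim
    · simpa using prefix_or_prefix_of_subtreeAt (t := r) hr hp hq hxu hxw

lemma exists_subtreeAt_lcaPos : ∀ {t : BTree} {S : Finset ℕ}, S ⊆ t.leafSet →
    ∃ w, t.subtreeAt (t.lcaPos S) = some w ∧ S ⊆ w.leafSet
  | .leaf x, _, h => ⟨.leaf x, rfl, h⟩
  | .node l r, S, h => by
    by_cases hl : S ⊆ l.leafSet
    · simpa [lcaPos, hl, subtreeAt] using exists_subtreeAt_lcaPos hl
    by_cases hr : S ⊆ r.leafSet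
    · simpa [lcaPos, hl, hr, subtreeAt] using exists_subtreeAt_lcaPos hr
    exact ⟨node l r, by simp [lcaPos, hl, hr, subtreeAt], h⟩

lemma lcaPos_prefix_of_not_subset {t l r : BTree} {S : Finset ℕ} {p : List Bool} {x : ℕ}
    (hn : t.leafList.Nodup) (hS : S ⊆ t.leafSet) (hp : t.subtreeAt p = some (node l r))
    (hxS : x ∈ S) (hx : x ∈ (node l r).leafList)
    (hl : ¬ S ⊆ l.leafSet) (hr : ¬ S ⊆ r.leafSet) : t.lcaPos S <+: p := by
  obtain ⟨w, hw, hSw⟩ := exists_subtreeAt_lcaPos hS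
  rcases prefix_or_prefix_of_subtreeAt hn hw hp (mem_leafSet.1 (hSw hxS)) hx with h | ⟨s, hs⟩
  · exact h
  cases s with
  | nil => exact ⟨[], by simpa using hs.symm⟩
  | cons b s =>
    rw [← hs, subtreeAt_append, hp] at hw
    have hsub : S ⊆ (if b then r else l).leafSet := fun y hy =>
      mem_leafSet.2 (mem_leafList_of_subtreeAt (by cases b <;> exact hw) (mem_leafSet.1 (hSw hy)))
    cases b <;> simp_all

lemma lcaPos_prefix_lcaPos_of_mem_spanNodes {t u : BTree} {S T : Finset ℕ} {p : List Bool}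
    {z : ℕ} (hn : t.leafList.Nodup) (hT : T ⊆ t.leafSet)
    (hST : Disjoint (t.spanNodes S) (t.spanNodes T)) (hpS : p ∈ t.spanNodes S)
    (hu : t.subtreeAt p = some u) (hz : z ∈ u.leafList) (hzT : z ∈ T) :
    t.lcaPos S <+: t.lcaPos T := by
  obtain ⟨w, hw, hTw⟩ := exists_subtreeAt_lcaPos hT
  rcases prefix_or_prefix_of_subtreeAt hn hw hu (mem_leafSet.1 (hTw hzT)) hz with h | h
  · exact (Set.disjoint_left.1 hST hpS ⟨h, u, hu, z, hzT, hz⟩).elim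
  · exact hpS.1.trans h

def siblingIdxOn (t : BTree) (S : Finset ℕ) (m : ℕ) : Option ℤ :=
  (t.restrictTo S).bind (·.siblingIdx m)

lemma olaEntry_eq_siblingIdxOn (t : BTree) (m : ℕ) :
    t.olaEntry m = (t.siblingIdxOn (Finset.range (m + 1)) m).getD 0 := by
  rw [olaEntry, restrictLe_eq_restrictTo_range, siblingIdxOn]

lemma siblingIdxOn_node_left {l r : BTree} {S : Finset ℕ} {m y : ℕ} (hmr : m ∉ r.leafList)
    (hy : y ∈ l.leafList) (hyS : y ∈ S) (hym : y ≠ m) :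
    (node l r).siblingIdxOn S m = l.siblingIdxOn S m := by
  obtain ⟨l', hl'⟩ := exists_restrictTo_eq_some hy hyS
  have hl'm : l' ≠ .leaf m := by
    rintro rfl
    exact hym (by simpa [leafList] using (mem_of_restrictTo_eq_some hl').2 ⟨hy, hyS⟩)
  cases hr : r.restrictTo S with
  | none => simp [siblingIdxOn, restrictTo, hl', hr]
  | some r' =>
    have hmr' : m ∉ r'.leafList := fun h => hmr ((mem_of_restrictTo_eq_some hr).1 h).1
    have hr'm : r' ≠ .leaf m := by rintro rfl; simp [leafList] at hmr'
    simp [siblingIdxOn, restrictTo, hl', hr, siblingIdx, hl'm, hr'm, siblingIdx_eq_none hmr']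

lemma siblingIdxOn_node_right {l r : BTree} {S : Finset ℕ} {m y : ℕ} (hml : m ∉ l.leafList)
    (hy : y ∈ r.leafList) (hyS : y ∈ S) (hym : y ≠ m) :
    (node l r).siblingIdxOn S m = r.siblingIdxOn S m := by
  obtain ⟨r', hr'⟩ := exists_restrictTo_eq_some hy hyS
  have hr'm : r' ≠ .leaf m := by
    rintro rfl
    exact hym (by simpa [leafList] using (mem_of_restrictTo_eq_some hr').2 ⟨hy, hyS⟩)
  cases hl : l.restrictTo S with
  | none => simp [siblingIdxOn, restrictTo, hr', hl]
  | some l' =>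
    have hml' : m ∉ l'.leafList := fun h => hml ((mem_of_restrictTo_eq_some hl).1 h).1
    have hl'm : l' ≠ .leaf m := by rintro rfl; simp [leafList] at hml'
    simp [siblingIdxOn, restrictTo, hl, hr', siblingIdx, hl'm, hr'm, siblingIdx_eq_none hml']

lemma MirrorEquiv.siblingIdxOn_eq {t t' : BTree} (h : MirrorEquiv t t') (hn : t.leafList.Nodup)
    (S : Finset ℕ) (m : ℕ) : t.siblingIdxOn S m = t'.siblingIdxOn S m := by
  have hS := h.restrictTo S
  unfold siblingIdxOn
  generalize hu : t.restrictTo S = u at hS ⊢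
  generalize t'.restrictTo S = u' at hS
  cases hS with
  | none => rfl
  | some h' => exact h'.siblingIdx_eq (nodup_of_restrictTo_eq_some hu hn) m

lemma siblingIdxOn_eq_of_restrictTo_eq_some {t s c : BTree} {L A : Finset ℕ}
    (ht : t.leafList.Nodup) (hs : s.leafList.Nodup) (hc : t.restrictTo L = some c)
    (hcs : c.clusters = s.clusters) (hAL : A ⊆ L) (m : ℕ) :
    t.siblingIdxOn A m = s.siblingIdxOn A m := by
  have hA : c.restrictTo A = t.restrictTo A := by
    simpa [hc, Finset.inter_eq_right.2 hAL] using restrictTo_bind_restrictTo t L A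
  rw [siblingIdxOn, ← hA, ← siblingIdxOn]
  exact (mirrorEquiv_of_clusters_eq (nodup_of_restrictTo_eq_some hc ht) hs hcs).siblingIdxOn_eq
    (nodup_of_restrictTo_eq_some hc ht) A m

/-- Above the least common ancestor of `A` the sibling of `m` does not change, and at that
ancestor `hsep` makes the two restrictions coincide. -/
lemma siblingIdxOn_eq_of_subset {t : BTree} {A B : Finset ℕ} {m y : ℕ} (hn : t.leafList.Nodup)
    (hAB : A ⊆ B) (hmA : m ∈ A) (hm : m ∈ t.leafList) (hy : y ∈ t.leafList) (hyA : y ∈ A)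
    (hym : y ≠ m)
    (hsep : ∀ l r, t.IsNode (node l r) → m ∈ (node l r).leafList → ¬ A ⊆ l.leafSet →
      ¬ A ⊆ r.leafSet → ∀ z ∈ (node l r).leafList, z ∈ B → z ∈ A) :
    t.siblingIdxOn B m = t.siblingIdxOn A m := by
  induction t with
  | leaf x => simp_all [leafList]
  | node l r ihl ihr =>
    obtain ⟨hnl, hnr, -⟩ := List.nodup_append.1 hn
    by_cases hl : A ⊆ l.leafSet
    · have hml := mem_leafSet.1 (hl hmA)
      have hmr : m ∉ r.leafList := notMem_right_of_nodup_node hn hml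
      have hyl := mem_leafSet.1 (hl hyA)
      rw [siblingIdxOn_node_left hmr hyl (hAB hyA) hym, siblingIdxOn_node_left hmr hyl hyA hym]
      exact ihl hnl hml hyl fun l' r' ⟨p, hp⟩ => hsep l' r' ⟨false :: p, hp⟩
    by_cases hr : A ⊆ r.leafSet
    · have hmr := mem_leafSet.1 (hr hmA)
      have hml : m ∉ l.leafList := fun h => notMem_right_of_nodup_node hn h hmr
      have hyr := mem_leafSet.1 (hr hyA)
      rw [siblingIdxOn_node_right hml hyr (hAB hyA) hym, siblingIdxOn_node_right hml hyr hyA hym]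
      exact ihr hnr hmr hyr fun l' r' ⟨p, hp⟩ => hsep l' r' ⟨true :: p, hp⟩
    rw [siblingIdxOn, siblingIdxOn, restrictTo_congr fun z hz =>
      ⟨hsep l r ⟨[], rfl⟩ hm hl hr z hz, fun h => hAB h⟩]

section Relabel

variable (σ : ℕ → ℕ)

lemma relabel_node (l r : BTree) : (node l r).relabel σ = node (l.relabel σ) (r.relabel σ) := rfl

lemma leafList_relabel (t : BTree) : (t.relabel σ).leafList = t.leafList.map σ := by
  induction t with
  | leaf x => rfl
  | node l r ihl ihr => simp [relabel_node, leafList, ihl, ihr]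

lemma leafSet_relabel (t : BTree) : (t.relabel σ).leafSet = t.leafSet.image σ := by
  ext; simp [leafSet, leafList_relabel]

lemma clusters_relabel (t : BTree) : (t.relabel σ).clusters = Set.image σ '' t.clusters := by
  induction t with
  | leaf x => simp [relabel, clusters]
  | node l r ihl ihr =>
    rw [relabel_node, clusters_node, clusters_node, ihl, ihr, Set.image_insert_eq,
      Set.image_union]
    congr 1
    ext
    simp [leafList, leafList_relabel, or_and_right, exists_or]

lemma subtreeAt_relabel : ∀ (t : BTree) (p : List Bool),
    (t.relabel σ).subtreeAt p = (t.subtreeAt p).map (relabel σ)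
  | t, [] => by cases t <;> rfl
  | .leaf _, _ :: _ => rfl
  | .node l _, false :: p => subtreeAt_relabel l p
  | .node _ r, true :: p => subtreeAt_relabel r p

variable {σ}

lemma restrictTo_relabel (hσ : σ.Injective) (t : BTree) (S : Finset ℕ) :
    (t.relabel σ).restrictTo (S.image σ) = (t.restrictTo S).map (relabel σ) := by
  induction t with
  | leaf x => by_cases hx : x ∈ S <;> simp [relabel, restrictTo, hx, hσ.eq_iff]
  | node l r ihl ihr =>
    simp only [relabel_node, restrictTo, ihl, ihr]
    cases l.restrictTo S <;> cases r.restrictTo S <;> rfl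

lemma lcaPos_relabel (hσ : σ.Injective) (t : BTree) (S : Finset ℕ) :
    (t.relabel σ).lcaPos (S.image σ) = t.lcaPos S := by
  induction t with
  | leaf x => rfl
  | node l r ihl ihr =>
    simp only [relabel_node, lcaPos, leafSet_relabel, Finset.image_subset_image_iff hσ, ihl, ihr]

lemma spanNodes_relabel (hσ : σ.Injective) (t : BTree) (S : Finset ℕ) :
    (t.relabel σ).spanNodes (S.image σ) = t.spanNodes S := by
  ext p
  simp [spanNodes, lcaPos_relabel hσ, subtreeAt_relabel, leafList_relabel, hσ.eq_iff]

end Relabel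

end BTree

open BTree

lemma IsOrdering.image_range {σ : Equiv.Perm ℕ} {n : ℕ} (hσ : IsOrdering σ n) :
    (Finset.range n).image σ = Finset.range n :=
  Finset.eq_of_subset_of_card_le
    (Finset.image_subset_iff.2 fun x hx => Finset.mem_range.2 (hσ x (Finset.mem_range.1 hx)))
    (Finset.card_image_of_injective _ σ.injective).ge

lemma BTree.IsPhylo.relabel {t : BTree} {n : ℕ} {σ : Equiv.Perm ℕ} (ht : t.IsPhylo n)
    (hσ : IsOrdering σ n) : (t.relabel σ).IsPhylo n :=
  ⟨by rw [leafList_relabel]; exact ht.1.map σ.injective,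
    by rw [leafSet_relabel, ht.2, hσ.image_range]⟩

section Forest

variable {ι : Type*} {ts : ι → BTree} {n f : ℕ} {comp : Fin f → BTree}

lemma IsAF.relabel {σ : Equiv.Perm ℕ} (hF : IsAF ts n comp) (hσ : IsOrdering σ n) :
    IsAF (fun a => (ts a).relabel σ) n (fun i => (comp i).relabel σ) := by
  obtain ⟨hnodup, hdisj, hcover, hrest, hspan⟩ := hF
  refine ⟨fun i => ?_, fun i j hij => ?_, ?_, fun a i => ?_, fun a i j hij => ?_⟩
  · rw [leafList_relabel]; exact (hnodup i).map σ.injective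
  · rw [leafSet_relabel, leafSet_relabel]
    exact Finset.disjoint_image σ.injective |>.2 (hdisj i j hij)
  · simp_rw [leafSet_relabel, ← Finset.biUnion_image, hcover, hσ.image_range]
  · obtain ⟨c, hc, hcl⟩ := hrest a i
    refine ⟨c.relabel σ, ?_, ?_⟩
    · rw [leafSet_relabel, restrictTo_relabel σ.injective, hc, Option.map_some]
    · rw [clusters_relabel, clusters_relabel, hcl]
  · simp only [leafSet_relabel, spanNodes_relabel σ.injective]
    exact hspan a i j hij

lemma inhEdge_relabel {σ : Equiv.Perm ℕ} {i j : Fin f} :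
    inhEdge (fun a => (ts a).relabel σ) (fun i => (comp i).relabel σ) i j ↔
      inhEdge ts comp i j := by
  simp only [inhEdge, leafSet_relabel, lcaPos_relabel σ.injective]

lemma IsAF.leafSet_subset (hts : ∀ a, (ts a).IsPhylo n) (hF : IsAF ts n comp) (a : ι)
    (i : Fin f) : (comp i).leafSet ⊆ (ts a).leafSet := by
  rw [(hts a).2, ← hF.2.2.1]
  exact Finset.subset_biUnion_of_mem (fun j => (comp j).leafSet) (Finset.mem_univ i)

lemma IsAF.exists_mem_leafSet (hts : ∀ a, (ts a).IsPhylo n) (hF : IsAF ts n comp) {a : ι}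
    {z : ℕ} (hz : z ∈ (ts a).leafList) : ∃ j, z ∈ (comp j).leafSet := by
  have hz : z ∈ Finset.univ.biUnion fun j => (comp j).leafSet := by
    rw [hF.2.2.1, ← (hts a).2]; exact mem_leafSet.2 hz
  simpa using hz

lemma IsAF.mem_of_isNode_of_le (hts : ∀ a, (ts a).IsPhylo n) (hF : IsAF ts n comp)
    (horder : ∀ i j : Fin f, i < j →
      ∀ x ∈ (comp i).leafSet, ∀ y ∈ (comp j).leafSet, x < y)
    (htopo : ∀ i j : Fin f, inhEdge ts comp i j → i < j) {a : ι} {i : Fin f} {m : ℕ}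
    (hm : m ∈ (comp i).leafSet) {l r : BTree} (hlr : (ts a).IsNode (node l r))
    (hmlr : m ∈ (node l r).leafList) (hl : ¬ (comp i).leafSet ⊆ l.leafSet)
    (hr : ¬ (comp i).leafSet ⊆ r.leafSet) {z : ℕ} (hz : z ∈ (node l r).leafList)
    (hzm : z ≤ m) :
    z ∈ (comp i).leafSet := by
  have ⟨_, _, _, _, hdisj⟩ := hF
  obtain ⟨p, hp⟩ := hlr
  have hn := (hts a).1
  have hspan : p ∈ (ts a).spanNodes (comp i).leafSet :=
    ⟨lcaPos_prefix_of_not_subset hn (hF.leafSet_subset hts a i) hp hm hmlr hl hr,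
      _, hp, m, hm, hmlr⟩
  obtain ⟨j, hzj⟩ := hF.exists_mem_leafSet hts (mem_leafList_of_subtreeAt hp hz)
  by_contra hzi
  have hij : i ≠ j := by rintro rfl; exact hzi hzj
  have hedge : inhEdge ts comp i j := ⟨hij, a, lcaPos_prefix_lcaPos_of_mem_spanNodes hn
    (hF.leafSet_subset hts a j) (hdisj a i j hij) hspan hp hz hzj⟩
  exact absurd (horder i j (htopo i j hedge) m hm z hzj) (not_lt.2 hzm)

theorem olaEntry_eq_of_isAF (hts : ∀ a, (ts a).IsPhylo n) (hF : IsAF ts n comp)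
    (horder : ∀ i j : Fin f, i < j →
      ∀ x ∈ (comp i).leafSet, ∀ y ∈ (comp j).leafSet, x < y)
    (htopo : ∀ i j : Fin f, inhEdge ts comp i j → i < j) {i : Fin f} {m y : ℕ}
    (hm : m ∈ (comp i).leafSet) (hy : y ∈ (comp i).leafSet) (hym : y < m) (a b : ι) :
    (ts a).olaEntry m = (ts b).olaEntry m := by
  set A := (comp i).leafSet ∩ Finset.range (m + 1)
  have hAi : A ⊆ (comp i).leafSet := Finset.inter_subset_left
  suffices ∀ a, (ts a).olaEntry m = ((comp i).siblingIdxOn A m).getD 0 by rw [this a, this b]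
  intro a
  have ⟨hnodup, _, _, hrest, _⟩ := hF
  have hmA : m ∈ A := Finset.mem_inter.2 ⟨hm, Finset.self_mem_range_succ m⟩
  have hyA : y ∈ A := Finset.mem_inter.2 ⟨hy, Finset.mem_range_succ_iff.2 hym.le⟩
  obtain ⟨c, hc, hcl⟩ := hrest a i
  rw [olaEntry_eq_siblingIdxOn, siblingIdxOn_eq_of_subset (hts a).1 Finset.inter_subset_right hmA
    (mem_leafSet.1 (hF.leafSet_subset hts a i hm)) (mem_leafSet.1 (hF.leafSet_subset hts a i hy))
    hyA hym.ne, siblingIdxOn_eq_of_restrictTo_eq_some (hts a).1 (hnodup i) hc hcl hAi]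
  intro l r hlr hmlr hl hr z hz hzB
  exact Finset.mem_inter.2 ⟨hF.mem_of_isNode_of_le hts horder htopo hm hlr hmlr
    (fun h => hl (hAi.trans h)) (fun h => hr (hAi.trans h)) hz
    (Finset.mem_range_succ_iff.1 hzB), hzB⟩

end Forest

end OLA

open OLA in
theorem stmt4_general {ι : Type} (n f : ℕ)
    (ts : ι → BTree) (hts : ∀ a, (ts a).IsPhylo n)
    (comp : Fin f → BTree) (hF : IsAAF ts n comp)
    (σ : Equiv.Perm ℕ) (hσ : IsOrdering σ n)
    (horder : ∀ i j : Fin f, i < j →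
      ∀ x ∈ (comp i).leafSet, ∀ y ∈ (comp j).leafSet, σ x < σ y)
    (htopo : ∀ i j : Fin f, inhEdge ts comp i j → i < j) :
    ∀ i : Fin f, ∀ x ∈ (comp i).leafSet,
      (∃ y ∈ (comp i).leafSet, σ y < σ x) →
      ∀ a b : ι, ola (ts a) σ (σ x) = ola (ts b) σ (σ x) := by
  rintro i x hx ⟨y, hy, hyx⟩ a b
  have horder' : ∀ i j : Fin f, i < j → ∀ x ∈ ((comp i).relabel σ).leafSet,
      ∀ y ∈ ((comp j).relabel σ).leafSet, x < y := by
    simp only [BTree.leafSet_relabel, Finset.mem_image]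
    rintro i j hij _ ⟨x, hx, rfl⟩ _ ⟨y, hy, rfl⟩
    exact horder i j hij x hx y hy
  exact olaEntry_eq_of_isAF (fun a => (hts a).relabel hσ) (hF.1.relabel hσ) horder'
    (fun i j h => htopo i j (inhEdge_relabel.1 h))
    (by rw [BTree.leafSet_relabel]; exact Finset.mem_image_of_mem σ hx)
    (by rw [BTree.leafSet_relabel]; exact Finset.mem_image_of_mem σ hy) hyx a b

open OLA in
/-- if `σ` lists the leaves of an acyclic agreement forest
component-by-component following a topological ordering of the inheritance
graph, then every non-first leaf of a component has identical OLA entries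
across all trees. -/
theorem stmt4 {ι : Type} [Fintype ι] [Nonempty ι] (n f : ℕ)
    (ts : ι → BTree) (hts : ∀ a, (ts a).IsPhylo n)
    (comp : Fin f → BTree) (hF : IsAAF ts n comp)
    (σ : Equiv.Perm ℕ) (hσ : IsOrdering σ n)
    (horder : ∀ i j : Fin f, i < j →
      ∀ x ∈ (comp i).leafSet, ∀ y ∈ (comp j).leafSet, σ x < σ y)
    (htopo : ∀ i j : Fin f, inhEdge ts comp i j → i < j) :
    ∀ i : Fin f, ∀ x ∈ (comp i).leafSet,
      (∃ y ∈ (comp i).leafSet, σ y < σ x) →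
      ∀ a b : ι, ola (ts a) σ (σ x) = ola (ts b) σ (σ x) :=
  stmt4_general n f ts hts comp hF σ hσ horder htopo
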